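/- arXiv:2105.01880 — 2 statements merged into one kernel-verified Lean document; each statement's English description precedes it below -/
import Mathlib

section
/- For all n ≥ 0, Hₙ(Bₖ(x)) = Hₙ(Bₖ), where Bₖ(x) are the Bernoulli polynomials and Bₖ = Bₖ(0) the Bernoulli numbers, and Hₙ denotes the Hankel determinant of order n+1. -/
/-!
Let `L` be the linear functional on `ℚ[X]` with `L (X ^ k) = B_k`. Then
`B_m(x) = L ((X + x) ^ m)`, so the Hankel matrix of `B_k(x)` is the Gram matrix `(L (p_i p_j))`
of the family `p_i = (X + x) ^ i`, while that of `B_k` is the Gram matrix of the monomials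
`X ^ i`. Writing the `p_i` in the monomial basis gives `(L (p_i p_j)) = A (L (X ^ (k + l))) Aᵀ`
with `A` the coefficient matrix, which is unitriangular because `p_i` is monic of degree `i`.
-/

/-- The Hankel determinant `Hₙ(c) = det (c_{i+j})_{0 ≤ i,j ≤ n}`. -/
def hankel (c : ℕ → ℚ) (n : ℕ) : ℚ :=
  Matrix.det (Matrix.of fun i j : Fin (n + 1) => c (i.1 + j.1))

open Matrix

namespace Polynomial

section CommSemiring

variable {R : Type*} [CommSemiring R]

noncomputable def momentFunctional (c : ℕ → R) : R[X] →ₗ[R] R :=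
  lsum fun k => c k • LinearMap.id

theorem momentFunctional_monomial (c : ℕ → R) (k : ℕ) (a : R) :
    momentFunctional c (monomial k a) = c k * a := by
  simp [momentFunctional]

theorem momentFunctional_X_pow (c : ℕ → R) (k : ℕ) : momentFunctional c (X ^ k) = c k := by
  rw [← monomial_one_right_eq_X_pow, momentFunctional_monomial, mul_one]

noncomputable def gramMatrix (L : R[X] →ₗ[R] R) {n : ℕ} (p : Fin n → R[X]) :
    Matrix (Fin n) (Fin n) R :=
  of fun i j => L (p i * p j)

def coeffMatrix {n : ℕ} (p : Fin n → R[X]) : Matrix (Fin n) (Fin n) R :=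
  of fun i k => (p i).coeff k

theorem eq_sum_fin_monomial_coeff {p : R[X]} {n : ℕ} (hp : p.natDegree < n) :
    p = ∑ k : Fin n, monomial k (p.coeff k) := by
  rw [Fin.sum_univ_eq_sum_range (fun k => monomial k (p.coeff k))]
  exact as_sum_range' p n hp

theorem gramMatrix_eq_coeffMatrix_mul_mul_transpose (L : R[X] →ₗ[R] R) {n : ℕ}
    (p : Fin n → R[X]) (hp : ∀ i, (p i).natDegree < n) :
    gramMatrix L p =
      coeffMatrix p * gramMatrix L (fun k : Fin n => X ^ (k : ℕ)) * (coeffMatrix p)ᵀ := by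
  ext i j
  have hL (k l : ℕ) (a b : R) :
      L (monomial k a * monomial l b) = a * L (X ^ k * X ^ l) * b := by
    rw [monomial_mul_monomial, ← smul_X_eq_monomial, map_smul, smul_eq_mul, pow_add, mul_assoc,
      mul_comm b, mul_assoc]
  rw [gramMatrix, of_apply, eq_sum_fin_monomial_coeff (hp i), eq_sum_fin_monomial_coeff (hp j),
    Finset.sum_mul_sum]
  simp only [map_sum, hL, mul_apply, gramMatrix, coeffMatrix, of_apply, transpose_apply,
    Finset.sum_mul]
  exact Finset.sum_comm

end CommSemiring

variable {R : Type*} [CommRing R]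

theorem det_coeffMatrix_of_monic {n : ℕ} (p : Fin n → R[X]) (hmonic : ∀ i, (p i).Monic)
    (hdeg : ∀ i, (p i).natDegree = i) : (coeffMatrix p).det = 1 := by
  have hlower : (coeffMatrix p).IsLowerTriangular :=
    fun i k hik => coeff_eq_zero_of_natDegree_lt ((hdeg i).trans_lt hik)
  rw [det_of_isLowerTriangular _ hlower]
  refine Finset.prod_eq_one fun i _ => ?_
  rw [coeffMatrix, of_apply, ← hdeg i]
  exact hmonic i

theorem det_gramMatrix_of_monic (L : R[X] →ₗ[R] R) {n : ℕ} (p : Fin n → R[X])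
    (hmonic : ∀ i, (p i).Monic) (hdeg : ∀ i, (p i).natDegree = i) :
    (gramMatrix L p).det = (gramMatrix L fun k : Fin n => X ^ (k : ℕ)).det := by
  rw [gramMatrix_eq_coeffMatrix_mul_mul_transpose L p fun i => (hdeg i).trans_lt i.isLt,
    det_mul, det_mul, det_transpose, det_coeffMatrix_of_monic p hmonic hdeg, one_mul, mul_one]

theorem momentFunctional_bernoulli_X_add_C_pow (x : ℚ) (m : ℕ) :
    momentFunctional _root_.bernoulli ((X + C x) ^ m) = (bernoulli m).eval x := by
  simp only [add_pow, map_sum, bernoulli, eval_finsetSum, eval_monomial]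
  refine Finset.sum_congr rfl fun k _ => ?_
  rw [← C_pow, ← C_eq_natCast, mul_assoc, ← C_mul, X_pow_mul, C_mul_X_pow_eq_monomial,
    momentFunctional_monomial]
  ring

end Polynomial

theorem hankel_bernoulliPoly (x : ℚ) (n : ℕ) :
    hankel (fun k => (Polynomial.bernoulli k).eval x) n = hankel (fun k => bernoulli k) n := by
  have h := Polynomial.det_gramMatrix_of_monic (Polynomial.momentFunctional bernoulli)
    (fun i : Fin (n + 1) => (Polynomial.X + Polynomial.C x) ^ (i : ℕ))
    (fun i => (Polynomial.monic_X_add_C x).pow i) (fun i => Polynomial.natDegree_pow_X_add_C i x)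
  simpa only [hankel, Polynomial.gramMatrix, ← pow_add,
    Polynomial.momentFunctional_bernoulli_X_add_C_pow, Polynomial.momentFunctional_X_pow] using h
end

section
/- For all n ≥ 0, the Hankel determinant of the sequence Eₖ(1) of Euler polynomial values at 1 satisfies Hₙ(Eₖ(1)) = (−1)^{n(n+1)/2} · ∏_{ℓ=1}^n (ℓ²/4)^{n+1−ℓ}. -/
/-- Evaluation `Eₙ(x)` of the Euler polynomials, defined by the recurrence
`Eₙ(x) = xⁿ - (1/2) ∑_{k<n} C(n,k) Eₖ(x)`, equivalent to the generating function
`2e^{xt}/(e^t+1) = ∑ Eₙ(x) tⁿ/n!`. -/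
def eulerEval (x : ℚ) : ℕ → ℚ :=
  WellFounded.fix Nat.lt_wfRel.wf fun n E =>
    x ^ n - 2⁻¹ * ∑ k : Fin n, (n.choose k : ℚ) * E k k.2

open Polynomial Finset Matrix

theorem det_moment_hankel_mul_prod_coeff {R : Type*} [CommRing R] (L : R[X] →ₗ[R] R) (p : ℕ → R[X])
    (hdeg : ∀ k, (p k).natDegree ≤ k) (hL : ∀ j k, j < k → L (X ^ j * p k) = 0) (n : ℕ) :
    (of fun i j : Fin (n + 1) => L (X ^ (i + j : ℕ))).det * ∏ k : Fin (n + 1), (p k).coeff k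
      = ∏ k : Fin (n + 1), L (X ^ (k : ℕ) * p k) := by
  set B : Matrix (Fin (n + 1)) (Fin (n + 1)) R := of fun i j => (p j).coeff i
  set A : Matrix (Fin (n + 1)) (Fin (n + 1)) R := of fun i j => L (X ^ (i : ℕ) * p j)
  have hB : B.det = ∏ k : Fin (n + 1), (p k).coeff k :=
    det_of_isUpperTriangular fun i j hji => coeff_eq_zero_of_natDegree_lt ((hdeg j).trans_lt hji)
  have hA : A.det = ∏ k : Fin (n + 1), L (X ^ (k : ℕ) * p k) :=
    det_of_isLowerTriangular _ fun i j hij => hL i j hij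
  have hHB : (of fun i j : Fin (n + 1) => L (X ^ (i + j : ℕ))) * B = A := by
    ext i j
    simp only [A, of_apply]
    conv_rhs => rw [(p j).as_sum_range' (n + 1) (by have := hdeg j; omega)]
    simp only [mul_apply, of_apply, B, mul_sum, map_sum, ← C_mul_X_pow_eq_monomial]
    rw [← Fin.sum_univ_eq_sum_range]
    refine sum_congr rfl fun a _ => ?_
    rw [mul_left_comm, ← smul_eq_C_mul, map_smul, smul_eq_mul, pow_add, mul_comm]
  rw [← hB, ← hA, ← det_mul, hHB]

theorem prod_range_succ_prod_Icc {M : Type*} [CommMonoid M] (f : ℕ → M) (n : ℕ) :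
    ∏ k ∈ range (n + 1), ∏ l ∈ Icc 1 k, f l = ∏ l ∈ Icc 1 n, f l ^ (n + 1 - l) := by
  rw [prod_comm' (t' := Icc 1 n) (s' := fun l => Icc l n)
    (by intro k l; simp only [mem_range, mem_Icc]; omega)]
  exact prod_congr rfl fun l _ => by rw [prod_const, Nat.card_Icc]

theorem eulerEval_eq (x : ℚ) (n : ℕ) :
    eulerEval x n = x ^ n - 2⁻¹ * ∑ k ∈ range n, (n.choose k : ℚ) * eulerEval x k := by
  rw [eulerEval, WellFounded.fix_eq, ← Fin.sum_univ_eq_sum_range]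

theorem sum_range_succ_choose_mul_eulerEval (x : ℚ) (n : ℕ) :
    ∑ k ∈ range (n + 1), (n.choose k : ℚ) * eulerEval x k = 2 * x ^ n - eulerEval x n := by
  rw [sum_range_succ, Nat.choose_self, eulerEval_eq x n]
  push_cast
  ring

noncomputable def eulerMoment (x : ℚ) : ℚ[X] →ₗ[ℚ] ℚ :=
  lsum fun k => LinearMap.toSpanSingleton ℚ ℚ (eulerEval x k)

@[simp]
theorem eulerMoment_monomial (x : ℚ) (k : ℕ) (a : ℚ) :
    eulerMoment x (monomial k a) = a * eulerEval x k := by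
  simp [eulerMoment]

@[simp]
theorem eulerMoment_X_pow (x : ℚ) (k : ℕ) : eulerMoment x (X ^ k) = eulerEval x k := by
  simp [← monomial_one_right_eq_X_pow]

theorem eulerMoment_X_add_one_pow (x : ℚ) (n : ℕ) :
    eulerMoment x ((X + 1) ^ n) = 2 * x ^ n - eulerEval x n := by
  rw [add_pow, map_sum, ← sum_range_succ_choose_mul_eulerEval]
  refine sum_congr rfl fun k _ => ?_
  rw [one_pow, mul_one, ← C_eq_natCast, X_pow_mul_C, ← smul_eq_C_mul, map_smul, eulerMoment_X_pow,
    smul_eq_mul]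

theorem eulerMoment_comp_X_add_one (x : ℚ) (p : ℚ[X]) :
    eulerMoment x (p.comp (X + 1)) = 2 * p.eval x - eulerMoment x p := by
  induction p using Polynomial.induction_on' with
  | add p q hp hq => simp only [add_comp, map_add, hp, hq, eval_add]; ring
  | monomial n a =>
    rw [monomial_comp, ← smul_eq_C_mul, map_smul, eulerMoment_X_add_one_pow, eulerMoment_monomial,
      eval_monomial, smul_eq_mul]
    ring

noncomputable def eulerOrthPoly : ℕ → ℚ[X]
  | 0 => 1
  | 1 => 2 * X - 1
  | k + 2 =>
    C (k + 2 : ℚ)⁻¹ * ((2 * X - 1) * eulerOrthPoly (k + 1) + ((k : ℚ[X]) + 1) * eulerOrthPoly k)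

theorem eulerOrthPoly_rec (k : ℕ) :
    ((k : ℚ[X]) + 2) * eulerOrthPoly (k + 2)
      = (2 * X - 1) * eulerOrthPoly (k + 1) + ((k : ℚ[X]) + 1) * eulerOrthPoly k := by
  have hk : (k + 2 : ℚ[X]) = C (k + 2 : ℚ) := by simp [map_ofNat]
  rw [eulerOrthPoly, hk, ← mul_assoc, ← C_mul, mul_inv_cancel₀ (by positivity), C_1, one_mul]

theorem eulerOrthPoly_eval_one (k : ℕ) : (eulerOrthPoly k).eval 1 = 1 := by
  induction k using eulerOrthPoly.induct with
  | case1 => simp [eulerOrthPoly]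
  | case2 => norm_num [eulerOrthPoly]
  | case3 k ih₁ ih₀ =>
    simp only [eulerOrthPoly, eval_mul, eval_add, eval_sub, eval_C, eval_X, eval_natCast,
      eval_ofNat, eval_one, ih₁, ih₀]
    field_simp
    ring

theorem natDegree_eulerOrthPoly_le (k : ℕ) : (eulerOrthPoly k).natDegree ≤ k := by
  induction k using eulerOrthPoly.induct with
  | case1 => simp [eulerOrthPoly]
  | case2 => simp only [eulerOrthPoly]; compute_degree
  | case3 k ih₁ ih₀ =>
    rw [eulerOrthPoly]
    refine (natDegree_C_mul_le _ _).trans (natDegree_add_le_of_degree_le ?_ ?_)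
    · refine natDegree_mul_le.trans ?_
      have : (2 * X - 1 : ℚ[X]).natDegree ≤ 1 := by compute_degree
      omega
    · refine natDegree_mul_le.trans ?_
      have : (k + 1 : ℚ[X]).natDegree ≤ 0 := by compute_degree
      omega

theorem coeff_eulerOrthPoly_self (k : ℕ) :
    (eulerOrthPoly k).coeff k = ∏ l ∈ Icc 1 k, 2 / (l : ℚ) := by
  induction k using eulerOrthPoly.induct with
  | case1 => simp [eulerOrthPoly]
  | case2 => simp [eulerOrthPoly, coeff_one]
  | case3 k ih₁ ih₀ =>
    have h₁ : (eulerOrthPoly (k + 1)).coeff (k + 2) = 0 :=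
      coeff_eq_zero_of_natDegree_lt ((natDegree_eulerOrthPoly_le _).trans_lt (by omega))
    have h₀ : (eulerOrthPoly k).coeff (k + 2) = 0 :=
      coeff_eq_zero_of_natDegree_lt ((natDegree_eulerOrthPoly_le _).trans_lt (by omega))
    rw [eulerOrthPoly, prod_Icc_succ_top (by omega), ← ih₁]
    simp only [coeff_C_mul, mul_add, sub_mul, add_mul, mul_assoc, coeff_add, coeff_sub,
      coeff_ofNat_mul, coeff_X_mul, coeff_natCast_mul, one_mul, h₁, h₀]
    push_cast
    field_simp
    ring

theorem eulerOrthPoly_sum_rec (k : ℕ) :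
    (2 * X - 1) * (∑ m ∈ range (k + 1), eulerOrthPoly m)
        + ((k : ℚ[X]) + 1) * (∑ m ∈ range k, eulerOrthPoly m)
      = (k : ℚ[X]) * (∑ m ∈ range (k + 1), eulerOrthPoly m)
        + ((k : ℚ[X]) + 1) * eulerOrthPoly (k + 1) := by
  induction k with
  | zero => simp [eulerOrthPoly]
  | succ k ih =>
    simp only [sum_range_succ] at ih ⊢
    push_cast
    linear_combination ih - eulerOrthPoly_rec k

theorem eulerOrthPoly_comp_X_add_one (k : ℕ) :
    (eulerOrthPoly k).comp (X + 1)
      = (∑ m ∈ range k, eulerOrthPoly m) + ∑ m ∈ range (k + 1), eulerOrthPoly m := by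
  induction k using eulerOrthPoly.induct with
  | case1 => simp [eulerOrthPoly]
  | case2 => simp [eulerOrthPoly, sum_range_succ]; ring
  | case3 k ih₁ ih₀ =>
    rw [show k.succ.succ = k + 2 from rfl]
    refine mul_left_cancel₀ (a := (k : ℚ[X]) + 2) (by exact_mod_cast (k + 1).succ_ne_zero) ?_
    have h := congrArg (·.comp (X + 1)) (eulerOrthPoly_rec k)
    simp only [mul_comp, add_comp, sub_comp, X_comp, one_comp, natCast_comp, ofNat_comp,
      Nat.cast_ofNat, ih₁, ih₀] at h
    have a₀ := eulerOrthPoly_sum_rec k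
    have a₁ := eulerOrthPoly_sum_rec (k + 1)
    simp only [sum_range_succ] at *
    push_cast at *
    linear_combination h + a₀ + a₁

theorem eulerMoment_sum_eulerOrthPoly (k : ℕ) :
    eulerMoment 1 (∑ m ∈ range (k + 1), eulerOrthPoly m) = 1 := by
  have h := eulerMoment_comp_X_add_one 1 (eulerOrthPoly k)
  rw [eulerOrthPoly_comp_X_add_one, eulerOrthPoly_eval_one, sum_range_succ, map_add, map_add] at h
  rw [sum_range_succ, map_add]
  linarith

theorem eulerMoment_eulerOrthPoly_succ (k : ℕ) : eulerMoment 1 (eulerOrthPoly (k + 1)) = 0 := by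
  have h := eulerMoment_sum_eulerOrthPoly (k + 1)
  rwa [sum_range_succ, map_add, eulerMoment_sum_eulerOrthPoly k, add_eq_left] at h

theorem eulerMoment_X_pow_succ_mul_eulerOrthPoly (j k : ℕ) :
    2 * eulerMoment 1 (X ^ (j + 1) * eulerOrthPoly (k + 1))
      = (k + 2) * eulerMoment 1 (X ^ j * eulerOrthPoly (k + 2))
        + eulerMoment 1 (X ^ j * eulerOrthPoly (k + 1))
        - (k + 1) * eulerMoment 1 (X ^ j * eulerOrthPoly k) := by
  have h : (2 : ℚ) • (X ^ (j + 1) * eulerOrthPoly (k + 1))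
      = ((k : ℚ) + 2) • (X ^ j * eulerOrthPoly (k + 2)) + X ^ j * eulerOrthPoly (k + 1)
        - ((k : ℚ) + 1) • (X ^ j * eulerOrthPoly k) := by
    simp only [smul_eq_C_mul, map_add, map_natCast, map_ofNat, C_1]
    linear_combination (-X ^ j) * eulerOrthPoly_rec k
  simpa using congrArg (eulerMoment 1) h

theorem eulerMoment_X_pow_mul_eulerOrthPoly_of_lt {j k : ℕ} (h : j < k) :
    eulerMoment 1 (X ^ j * eulerOrthPoly k) = 0 := by
  induction j generalizing k with
  | zero =>
    obtain ⟨k, rfl⟩ : ∃ k', k = k' + 1 := ⟨k - 1, by omega⟩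
    simpa using eulerMoment_eulerOrthPoly_succ k
  | succ j ih =>
    obtain ⟨k, rfl⟩ : ∃ k', k = k' + 2 := ⟨k - 2, by omega⟩
    have h := eulerMoment_X_pow_succ_mul_eulerOrthPoly j (k + 1)
    rw [ih (by omega), ih (by omega), ih (by omega)] at h
    linarith

theorem eulerMoment_X_pow_mul_eulerOrthPoly_self (k : ℕ) :
    eulerMoment 1 (X ^ k * eulerOrthPoly k) = ∏ l ∈ Icc 1 k, (-(l : ℚ) / 2) := by
  induction k with
  | zero =>
    rw [eulerOrthPoly, mul_one, eulerMoment_X_pow, eulerEval_eq]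
    simp
  | succ k ih =>
    have h := eulerMoment_X_pow_succ_mul_eulerOrthPoly k k
    rw [eulerMoment_X_pow_mul_eulerOrthPoly_of_lt (j := k) (k := k + 2) (by omega),
      eulerMoment_X_pow_mul_eulerOrthPoly_of_lt (j := k) (k := k + 1) (by omega), ih] at h
    rw [prod_Icc_succ_top (by omega)]
    push_cast
    linear_combination h / 2

theorem coeff_eulerOrthPoly_self_ne_zero (k : ℕ) : (eulerOrthPoly k).coeff k ≠ 0 := by
  rw [coeff_eulerOrthPoly_self]
  exact prod_ne_zero_iff.2 fun l hl =>
    div_ne_zero two_ne_zero (Nat.cast_ne_zero.2 (by simp at hl; omega))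

theorem eulerMoment_X_pow_mul_eulerOrthPoly_self_div_coeff (k : ℕ) :
    eulerMoment 1 (X ^ k * eulerOrthPoly k) / (eulerOrthPoly k).coeff k
      = (-1) ^ k * ∏ l ∈ Icc 1 k, ((l : ℚ) ^ 2 / 4) := by
  have hsign := prod_neg (s := Icc 1 k) fun l : ℕ => (l : ℚ) ^ 2 / 4
  rw [Nat.card_Icc, Nat.add_sub_cancel] at hsign
  rw [eulerMoment_X_pow_mul_eulerOrthPoly_self, coeff_eulerOrthPoly_self, ← prod_div_distrib,
    ← hsign]
  refine prod_congr rfl fun l hl => ?_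
  have : (l : ℚ) ≠ 0 := Nat.cast_ne_zero.2 (by simp at hl; omega)
  field_simp
  ring

theorem hankel_eulerEval_one (n : ℕ) :
    hankel (fun k => eulerEval 1 k) n
      = (-1) ^ (n * (n + 1) / 2)
      * ∏ ℓ ∈ Finset.Icc 1 n, ((ℓ : ℚ) ^ 2 / 4) ^ (n + 1 - ℓ) := by
  have hcoeff : ∏ k : Fin (n + 1), (eulerOrthPoly k).coeff k ≠ 0 :=
    prod_ne_zero_iff.2 fun k _ => coeff_eulerOrthPoly_self_ne_zero k
  have key := eq_div_of_mul_eq hcoeff <| det_moment_hankel_mul_prod_coeff (eulerMoment 1)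
    eulerOrthPoly natDegree_eulerOrthPoly_le (fun _ _ => eulerMoment_X_pow_mul_eulerOrthPoly_of_lt) n
  simp only [eulerMoment_X_pow, ← prod_div_distrib,
    eulerMoment_X_pow_mul_eulerOrthPoly_self_div_coeff] at key
  rw [hankel, key,
    Fin.prod_univ_eq_prod_range (fun k => (-1) ^ k * ∏ l ∈ Icc 1 k, ((l : ℚ) ^ 2 / 4)),
    prod_mul_distrib, prod_pow_eq_pow_sum, sum_range_id, prod_range_succ_prod_Icc,
    Nat.add_sub_cancel, mul_comm n]
end
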